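/- Under the setup of the per-task descent inequality (ℓ_i L-smooth, GᵀGα = p/α with p_i > 0 summing to 1, Δθ = Gα, θ' = θ − μΔθ), choose the step size μ = (1/K) ∑_{i=1}^K p_i/(L α_i). Then the average loss L̄(θ) = (1/K) ∑_i ℓ_i(θ) satisfies L̄(θ') ≤ L̄(θ) − L μ²/2. -/

import Mathlib

/-!
Each `ℓ i` satisfies the descent lemma
`ℓ i θ' ≤ ℓ i θ - μ ⟪∇ℓ i θ, Δθ⟫ + L μ² ‖Δθ‖² / 2`.
The condition on `α` gives `⟪∇ℓ i θ, Δθ⟫ = p i / α i` and `‖Δθ‖² = ∑ p i = 1`;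
after averaging over `i`, the choice of `μ` turns the linear term into `-L μ²`,
which leaves `-L μ² / 2`.
-/

open scoped RealInnerProductSpace

section Descent

variable {E : Type*} [NormedAddCommGroup E] [InnerProductSpace ℝ E] [CompleteSpace E]
  {f : E → ℝ} {g : E → E}

theorem HasGradientAt.hasDerivAt_comp_add_smul {f' x v : E} {t : ℝ}
    (hf : HasGradientAt f f' (x + t • v)) :
    HasDerivAt (fun s : ℝ => f (x + s • v)) ⟪f', v⟫ t := by
  have hline : HasDerivAt (fun s : ℝ => x + s • v) v t := by
    simpa using ((hasDerivAt_id t).smul_const v).const_add x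
  exact hf.hasFDerivAt.comp_hasDerivAt t hline

theorem le_add_inner_add_of_lipschitz_gradient {L : ℝ} (hf : ∀ x, HasGradientAt f (g x) x)
    (hg : ∀ x y, ‖g x - g y‖ ≤ L * ‖x - y‖) (x y : E) :
    f y ≤ f x + ⟪g x, y - x⟫ + L / 2 * ‖y - x‖ ^ 2 := by
  set v := y - x
  -- The claim is `φ 1 ≤ φ 0`; `φ` is antitone on `[0, ∞)` by Cauchy–Schwarz and the Lipschitz bound.
  let φ : ℝ → ℝ := fun t => f (x + t • v) - t * ⟪g x, v⟫ - L / 2 * ‖v‖ ^ 2 * t ^ 2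
  have hφ : ∀ t, HasDerivAt φ (⟪g (x + t • v) - g x, v⟫ - L * ‖v‖ ^ 2 * t) t := fun t => by
    have := (((hf (x + t • v)).hasDerivAt_comp_add_smul).sub
      (hasDerivAt_mul_const ⟪g x, v⟫)).sub ((hasDerivAt_pow 2 t).const_mul (L / 2 * ‖v‖ ^ 2))
    refine this.congr_deriv ?_
    rw [inner_sub_left]; push_cast; ring
  have hφ' : ∀ t ∈ interior (Set.Ici (0 : ℝ)), ⟪g (x + t • v) - g x, v⟫ - L * ‖v‖ ^ 2 * t ≤ 0 := by
    intro t ht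
    rw [interior_Ici, Set.mem_Ioi] at ht
    rw [sub_nonpos]
    calc ⟪g (x + t • v) - g x, v⟫ ≤ ‖g (x + t • v) - g x‖ * ‖v‖ := real_inner_le_norm _ _
      _ ≤ L * ‖t • v‖ * ‖v‖ := by
          gcongr
          simpa using hg (x + t • v) x
      _ = L * ‖v‖ ^ 2 * t := by
          rw [norm_smul, Real.norm_of_nonneg ht.le]; ring
  have hanti : AntitoneOn φ (Set.Ici 0) :=
    antitoneOn_of_hasDerivWithinAt_nonpos (convex_Ici 0)
      (fun t _ => (hφ t).continuousAt.continuousWithinAt)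
      (fun t _ => (hφ t).hasDerivWithinAt) hφ'
  have hφ01 := hanti (Set.mem_Ici.2 le_rfl) (Set.mem_Ici.2 zero_le_one) zero_le_one
  simp only [φ, zero_smul, add_zero, one_smul, v, add_sub_cancel] at hφ01
  linarith

end Descent

theorem norm_sum_smul_sq_eq_sum_of_inner_eq_div {E ι : Type*} [NormedAddCommGroup E]
    [InnerProductSpace ℝ E] [Fintype ι] {v : ι → E} {p α : ι → ℝ} (hα : ∀ i, α i ≠ 0)
    (h : ∀ i, ⟪v i, ∑ j, α j • v j⟫ = p i / α i) :
    ‖∑ j, α j • v j‖ ^ 2 = ∑ i, p i := by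
  rw [← real_inner_self_eq_norm_sq, sum_inner]
  refine Finset.sum_congr rfl fun i _ => ?_
  rw [real_inner_smul_left, h i, mul_div_cancel₀ _ (hα i)]

theorem stmt_7_general (d K : ℕ) (ℓ : Fin K → EuclideanSpace ℝ (Fin d) → ℝ)
    (g : Fin K → EuclideanSpace ℝ (Fin d) → EuclideanSpace ℝ (Fin d)) (L : ℝ)
    (hL : 0 < L)
    (hgrad : ∀ i x, HasGradientAt (ℓ i) (g i x) x)
    (hlip : ∀ i x y, ‖g i x - g i y‖ ≤ L * ‖x - y‖)
    (θ : EuclideanSpace ℝ (Fin d))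
    (p α : Fin K → ℝ)
    (hpsum : ∑ i, p i = 1)
    (hα : ∀ i, 0 < α i)
    (heq : ∀ i, ⟪g i θ, ∑ j, α j • g j θ⟫ = p i / α i)
    (μ : ℝ) (hμ : μ = (1 / (K : ℝ)) * ∑ i, p i / (L * α i)) :
    (1 / (K : ℝ)) * ∑ i, ℓ i (θ - μ • ∑ j, α j • g j θ) ≤
      (1 / (K : ℝ)) * ∑ i, ℓ i θ - L * μ ^ 2 / 2 := by
  have hK : (K : ℝ) ≠ 0 := by
    rintro hK
    rw [Nat.cast_eq_zero] at hK
    subst hK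
    simp at hpsum
  set Δ := ∑ j, α j • g j θ
  have hΔ : ‖Δ‖ ^ 2 = 1 :=
    hpsum ▸ norm_sum_smul_sq_eq_sum_of_inner_eq_div (fun i => (hα i).ne') heq
  have hstep : ∀ i, ℓ i (θ - μ • Δ) ≤ ℓ i θ - μ * (p i / α i) + L / 2 * μ ^ 2 := fun i => by
    have := le_add_inner_add_of_lipschitz_gradient (hgrad i) (hlip i) θ (θ - μ • Δ)
    rwa [sub_sub_cancel_left, inner_neg_right, real_inner_smul_right, heq i, norm_neg,
      norm_smul, mul_pow, Real.norm_eq_abs, sq_abs, hΔ, mul_one, ← sub_eq_add_neg] at this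
  have hmean : (1 / (K : ℝ)) * ∑ i, p i / α i = L * μ := by
    simp_rw [hμ, mul_comm L, ← div_div, ← Finset.sum_div]
    field_simp
  calc (1 / (K : ℝ)) * ∑ i, ℓ i (θ - μ • Δ)
      ≤ (1 / (K : ℝ)) * ∑ i, (ℓ i θ - μ * (p i / α i) + L / 2 * μ ^ 2) := by
        gcongr with i
        exact hstep i
    _ = (1 / (K : ℝ)) * ∑ i, ℓ i θ - μ * ((1 / (K : ℝ)) * ∑ i, p i / α i) + L / 2 * μ ^ 2 := by
        rw [Finset.sum_add_distrib, Finset.sum_sub_distrib, ← Finset.mul_sum, Finset.sum_const,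
          Finset.card_univ, Fintype.card_fin, nsmul_eq_mul]
        field_simp
    _ = (1 / (K : ℝ)) * ∑ i, ℓ i θ - L * μ ^ 2 / 2 := by
        rw [hmean]
        ring

/-- average-loss descent: under the per-task descent setup, with
step size `μ = (1/K) ∑ p_i/(L α_i)`, the average loss `L̄ = (1/K) ∑ ℓ_i`
satisfies `L̄(θ') ≤ L̄(θ) − L μ²/2`. -/
theorem stmt_7 (d K : ℕ) (ℓ : Fin K → EuclideanSpace ℝ (Fin d) → ℝ)
    (g : Fin K → EuclideanSpace ℝ (Fin d) → EuclideanSpace ℝ (Fin d)) (L : ℝ)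
    (hL : 0 < L)
    (hgrad : ∀ i x, HasGradientAt (ℓ i) (g i x) x)
    (hlip : ∀ i x y, ‖g i x - g i y‖ ≤ L * ‖x - y‖)
    (θ : EuclideanSpace ℝ (Fin d))
    (p α : Fin K → ℝ)
    (hp : ∀ i, 0 < p i) (hpsum : ∑ i, p i = 1)
    (hα : ∀ i, 0 < α i)
    (heq : ∀ i, ⟪g i θ, ∑ j, α j • g j θ⟫ = p i / α i)
    (μ : ℝ) (hμ : μ = (1 / (K : ℝ)) * ∑ i, p i / (L * α i)) :
    (1 / (K : ℝ)) * ∑ i, ℓ i (θ - μ • ∑ j, α j • g j θ) ≤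
      (1 / (K : ℝ)) * ∑ i, ℓ i θ - L * μ ^ 2 / 2 :=
  stmt_7_general d K ℓ g L hL hgrad hlip θ p α hpsum hα heq μ hμ
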